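/- Let X be a finite discrete space with at least two elements, Γ a nonempty set, and φ : Γ → Γ a map all of whose points are periodic. Then (X^Γ, σ_φ) has the uniform stroboscopical property. -/
import Mathlib


open Filter

/-- The generalized shift `σ_φ` on `X^Γ`. -/
def genShift {X Γ : Type*} (φ : Γ → Γ) (x : Γ → X) : Γ → X := fun γ => x (φ γ)

/-- The basic entourage `α_H` of agreement on `H ⊆ Γ`. -/
def agreeEnt (X : Type*) {Γ : Type*} (H : Set Γ) : Set ((Γ → X) × (Γ → X)) :=
  {p | ∀ γ ∈ H, p.1 γ = p.2 γ}

/-- Membership in the unique compatible uniform structure `𝒰` on `X^Γ`: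
`D` contains some `α_H` with `H ⊆ Γ` finite. -/
def IsProdEntourage (X : Type*) {Γ : Type*} (D : Set ((Γ → X) × (Γ → X))) : Prop :=
  ∃ H : Set Γ, H.Finite ∧ agreeEnt X H ⊆ D

/-- `ω_f(A, x)`: limits of convergent subsequences of `(f^[A i] x)_i`. -/
def omegaLimitSet {Z : Type*} [TopologicalSpace Z] (f : Z → Z) (A : ℕ → ℕ) (x : Z) : Set Z :=
  {y | ∃ k : ℕ → ℕ, StrictMono k ∧ Tendsto (fun i => f^[A (k i)] x) atTop (nhds y)}

/-- The stroboscopical property of a dynamical system `(Z, f)`. -/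
def Strob {Z : Type*} [TopologicalSpace Z] (f : Z → Z) : Prop :=
  ∀ z : Z, ∀ A : ℕ → ℕ, StrictMono A → ∃ x : Z, z ∈ omegaLimitSet f A x

/-- The uniform stroboscopical property of `(X^Γ, σ_φ)`: every strictly increasing
sequence `A` has a subsequence `(A (k i))` for which there is `ϱ` with
`σ_φ^[A (k i)] ∘ ϱ → id` uniformly. -/
def UnifStrobShift {X Γ : Type*} (φ : Γ → Γ) : Prop :=
  ∀ A : ℕ → ℕ, StrictMono A → ∃ k : ℕ → ℕ, StrictMono k ∧
    ∃ ρ : (Γ → X) → (Γ → X),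
      ∀ D : Set ((Γ → X) × (Γ → X)), IsProdEntourage X D →
        ∃ N : ℕ, ∀ i, N ≤ i → ∀ z : Γ → X, (z, (genShift φ)^[A (k i)] (ρ z)) ∈ D

/-- Extraction of a subsequence along which `A (k i)` is eventually constant
modulo every factorial. -/
lemma exists_subseq_mod (A : ℕ → ℕ) :
    ∃ k : ℕ → ℕ, StrictMono k ∧ ∃ L : ∀ j : ℕ, ZMod (j.factorial),
      ∀ j : ℕ, ∀ᶠ i in atTop, ((A (k i) : ZMod (j.factorial))) = L j := by
  haveI : ∀ j : ℕ, NeZero (j.factorial) := fun j => ⟨j.factorial_pos.ne'⟩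
  letI : ∀ j : ℕ, TopologicalSpace (ZMod (j.factorial)) := fun _ => ⊥
  haveI : ∀ j : ℕ, DiscreteTopology (ZMod (j.factorial)) := fun _ => ⟨rfl⟩
  obtain ⟨L, k, hk, hconv⟩ :=
    CompactSpace.tendsto_subseq (X := ∀ j : ℕ, ZMod (j.factorial))
      (fun n j => (A n : ZMod (j.factorial)))
  refine ⟨k, hk, L, fun j => ?_⟩
  have := (tendsto_pi_nhds.mp hconv) j
  rwa [nhds_discrete, tendsto_pure] at this

/-- Iterates of the generalized shift. -/
lemma genShift_iterate {X Γ : Type*} (φ : Γ → Γ) (x : Γ → X) (n : ℕ) (γ : Γ) :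
    (genShift φ)^[n] x γ = x (φ^[n] γ) := by
  induction n generalizing x with
  | zero => rfl
  | succ n ih =>
    rw [Function.iterate_succ_apply, ih]
    show x (φ (φ^[n] γ)) = x (φ^[n+1] γ)
    rw [Function.iterate_succ_apply']

lemma mod_arith (m n r : ℕ) (hm : 0 < m) (hn : n % m = r % m) :
    m ∣ n + (m - r % m) % m := by
  have hrm : r % m < m := Nat.mod_lt _ hm
  rcases Nat.eq_zero_or_pos (r % m) with h0 | h0
  · rw [h0, Nat.sub_zero, Nat.mod_self, Nat.add_zero]
    exact Nat.dvd_of_mod_eq_zero (by omega)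
  · have hlt : m - r % m < m := by omega
    rw [Nat.mod_eq_of_lt hlt]
    apply Nat.dvd_of_mod_eq_zero
    have h1 : n % m + (m - r % m) = m := by omega
    rw [Nat.add_mod, Nat.mod_eq_of_lt hlt, h1, Nat.mod_self]

/-- if every point of `Γ` is periodic for `φ`, then `(X^Γ, σ_φ)` has
the uniform stroboscopical property. -/
theorem stmt_9 {X Γ : Type*} [Fintype X] [Nontrivial X] [Nonempty Γ] (φ : Γ → Γ)
    (h : ∀ lam : Γ, ∃ m : ℕ, 1 ≤ m ∧ φ^[m] lam = lam) :
    UnifStrobShift (X := X) φ := by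
  intro A hA
  obtain ⟨k, hk, L, hL⟩ := exists_subseq_mod A
  refine ⟨k, hk, ?_⟩
  have hper : ∀ γ : Γ, γ ∈ Function.periodicPts φ := fun γ => by
    obtain ⟨m, hm1, hm2⟩ := h γ; exact ⟨m, hm1, hm2⟩
  set M : Γ → ℕ := fun γ => Function.minimalPeriod φ γ with hMdef
  have hMpos : ∀ γ, 0 < M γ := fun γ =>
    Function.minimalPeriod_pos_of_mem_periodicPts (hper γ)
  set r : Γ → ℕ := fun γ => (L (M γ)).val with hrdef
  set g : Γ → Γ := fun δ => φ^[(M δ - r δ % M δ) % M δ] δ with hgdef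
  refine ⟨fun z => z ∘ g, ?_⟩
  rintro D ⟨H, hHfin, hHD⟩
  have key : ∀ᶠ i in atTop, ∀ γ ∈ H, (A (k i)) % (M γ) = r γ % (M γ) := by
    rw [eventually_all_finite hHfin]
    intro γ hγ
    haveI : NeZero ((M γ).factorial) := ⟨(M γ).factorial_pos.ne'⟩
    filter_upwards [hL (M γ)] with i hi
    have hfac : (M γ) ∣ (M γ).factorial := Nat.dvd_factorial (hMpos γ) le_rfl
    have hcast : ((A (k i) : ℕ) : ZMod ((M γ).factorial))
        = ((r γ : ℕ) : ZMod ((M γ).factorial)) := by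
      rw [hi, hrdef, ZMod.natCast_zmod_val]
    have hmod : A (k i) ≡ r γ [MOD (M γ).factorial] :=
      (ZMod.natCast_eq_natCast_iff _ _ _).mp hcast
    exact hmod.of_dvd hfac
  obtain ⟨N, hN⟩ := eventually_atTop.mp key
  refine ⟨N, fun i hi z => ?_⟩
  apply hHD
  intro γ hγ
  show z γ = (genShift φ)^[A (k i)] (z ∘ g) γ
  rw [genShift_iterate]
  show z γ = z (g (φ^[A (k i)] γ))
  have hMeq : M (φ^[A (k i)] γ) = M γ :=
    Function.minimalPeriod_apply_iterate (hper γ) _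
  have hreq : r (φ^[A (k i)] γ) = r γ := by
    simp only [hrdef]
    exact congrArg (fun m : ℕ => (L m).val) hMeq
  have hg' : g (φ^[A (k i)] γ) = γ := by
    rw [hgdef]
    simp only [hMeq, hreq]
    rw [← Function.iterate_add_apply]
    have hdvd : M γ ∣ A (k i) + (M γ - r γ % M γ) % M γ :=
      mod_arith (M γ) (A (k i)) (r γ) (hMpos γ) (hN i hi γ hγ)
    have : Function.IsPeriodicPt φ ((M γ - r γ % M γ) % M γ + A (k i)) γ := by
      rw [Function.isPeriodicPt_iff_minimalPeriod_dvd]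
      rwa [Nat.add_comm]
    exact this
  rw [hg']
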